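/- arXiv:2501.01322 — 2 statements merged into one kernel-verified Lean document; each statement's English description precedes it below -/
import Mathlib

section
/- Let p, q be coprime positive integers and let v₀ ∈ L²(T). Then the free Schrödinger evolution at rational time satisfies, in L²(T): Σ_{n∈ℤ} e^{inx} e^{2πi n² p/q} v̂₀(n) = (1/q) Σ_{k=0}^{q-1} Σ_{m=0}^{q-1} e^{2πi km/q} e^{2πi p m²/q} v₀(x - 2πk/q). -/
open MeasureTheory Filter Topology Real Finset

/-- The `n`-th Fourier coefficient `v̂(n) = (1/2π) ∫_{-π}^{π} e^{-iny} v(y) dy`. -/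
noncomputable def fc (v : ℝ → ℂ) (n : ℤ) : ℂ :=
  (1 / (2 * π) : ℂ) * ∫ y in (-π : ℝ)..π, Complex.exp (-Complex.I * n * y) * v y


lemma talbot_exp_one_iff (q : ℕ) (hq : 0 < q) (a : ℤ) :
    Complex.exp (2 * π * Complex.I * a / q) = 1 ↔ (q : ℤ) ∣ a := by
  rw [Complex.exp_eq_one_iff]
  constructor
  · rintro ⟨n, hn⟩
    have hq' : (q : ℂ) ≠ 0 := Nat.cast_ne_zero.mpr hq.ne'
    have hπ : (π : ℂ) ≠ 0 := Complex.ofReal_ne_zero.mpr Real.pi_ne_zero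
    have h2 : (2 : ℂ) * π * Complex.I ≠ 0 := by
      simp [Complex.I_ne_zero, hπ]
    have key : (a : ℂ) = q * n := by
      field_simp at hn
      have := mul_left_cancel₀ h2
        (show (2:ℂ) * π * Complex.I * a = 2 * π * Complex.I * (q * n) by
          linear_combination (2 * (π : ℂ) * Complex.I) * hn)
      exact this
    exact ⟨n, by exact_mod_cast key⟩
  · rintro ⟨c, rfl⟩
    refine ⟨c, ?_⟩
    have hq' : (q : ℂ) ≠ 0 := Nat.cast_ne_zero.mpr hq.ne'
    push_cast
    field_simp

lemma talbot_inner_sum (q : ℕ) (hq : 0 < q) (a : ℤ) :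
    ∑ k ∈ range q, Complex.exp (2 * π * Complex.I * a * k / q) =
      if (q : ℤ) ∣ a then (q : ℂ) else 0 := by
  have key : ∀ k : ℕ, Complex.exp (2 * π * Complex.I * a * k / q) =
      Complex.exp (2 * π * Complex.I * a / q) ^ k := by
    intro k
    rw [← Complex.exp_nat_mul]; ring_nf
  simp_rw [key]
  set z := Complex.exp (2 * π * Complex.I * a / q) with hz
  by_cases h1 : z = 1
  · rw [if_pos ((talbot_exp_one_iff q hq a).mp h1)]
    simp [h1]
  · rw [if_neg (fun hd => h1 ((talbot_exp_one_iff q hq a).mpr hd))]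
    rw [geom_sum_eq h1]
    have : z ^ q = 1 := by
      rw [hz, ← Complex.exp_nat_mul]
      have hq' : (q : ℂ) ≠ 0 := Nat.cast_ne_zero.mpr hq.ne'
      have : (q : ℂ) * (2 * π * Complex.I * a / q) = a * (2 * π) * Complex.I := by
        field_simp
      rw [this]
      have := Complex.exp_int_mul_two_pi_mul_I a
      push_cast at this ⊢
      convert this using 2
      ring
    simp [this]

lemma talbot_gauss (p q : ℕ) (hq : 0 < q) (n : ℤ) :
    ∑ k ∈ range q, ∑ m ∈ range q,
      Complex.exp (2 * π * Complex.I * k * m / q) *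
        Complex.exp (2 * π * Complex.I * p * m ^ 2 / q) *
          Complex.exp (-(2 * π * Complex.I * n * k / q))
    = q * Complex.exp (2 * π * Complex.I * p * n ^ 2 / q) := by
  have hq' : (q : ℂ) ≠ 0 := Nat.cast_ne_zero.mpr hq.ne'
  rw [Finset.sum_comm]
  have hterm : ∀ m ∈ range q, ∀ k ∈ range q,
      Complex.exp (2 * π * Complex.I * k * m / q) *
        Complex.exp (2 * π * Complex.I * p * m ^ 2 / q) *
          Complex.exp (-(2 * π * Complex.I * n * k / q)) =
      Complex.exp (2 * π * Complex.I * p * m ^ 2 / q) *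
        Complex.exp (2 * π * Complex.I * (((m : ℤ) : ℂ) - n) * k / q) := by
    intro m _ k _
    simp only [← Complex.exp_add]
    congr 1
    push_cast
    field_simp
    ring
  rw [Finset.sum_congr rfl (fun m hm => Finset.sum_congr rfl (hterm m hm))]
  have hrow : ∀ m ∈ range q,
      ∑ k ∈ range q, Complex.exp (2 * π * Complex.I * p * m ^ 2 / q) *
        Complex.exp (2 * π * Complex.I * (((m : ℤ) : ℂ) - n) * k / q) =
      Complex.exp (2 * π * Complex.I * p * m ^ 2 / q) *
        (if (q : ℤ) ∣ ((m : ℤ) - n) then (q : ℂ) else 0) := by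
    intro m _
    rw [← Finset.mul_sum]
    congr 1
    have := talbot_inner_sum q hq ((m : ℤ) - n)
    push_cast at this
    exact this
  rw [Finset.sum_congr rfl hrow]
  set m₀ : ℕ := (n % q).toNat with hm₀def
  have hm₀n : (m₀ : ℤ) = n % q := Int.toNat_of_nonneg (Int.emod_nonneg n (by exact_mod_cast hq.ne'))
  have hm₀lt : m₀ < q := by
    have := Int.emod_lt_of_pos n (show (0:ℤ) < q by exact_mod_cast hq)
    omega
  have hdvd : (q : ℤ) ∣ ((m₀ : ℤ) - n) := by
    rw [hm₀n]
    exact ⟨-(n / q), by rw [Int.emod_def]; ring⟩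
  rw [Finset.sum_eq_single m₀]
  · rw [if_pos hdvd]
    obtain ⟨c, hc⟩ := hdvd
    have hdvd2 : (q : ℤ) ∣ ((p : ℤ) * ((m₀ : ℤ) ^ 2 - n ^ 2)) :=
      ⟨p * c * ((m₀ : ℤ) + n), by linear_combination ((p : ℤ) * ((m₀ : ℤ) + n)) * hc⟩
    have hone := (talbot_exp_one_iff q hq ((p : ℤ) * ((m₀ : ℤ) ^ 2 - n ^ 2))).mpr hdvd2
    have key : Complex.exp (2 * (π : ℂ) * Complex.I * (p : ℂ) * (m₀ : ℂ) ^ 2 / q) =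
        Complex.exp (2 * (π : ℂ) * Complex.I * (p : ℂ) * ((n : ℤ) : ℂ) ^ 2 / q) := by
      have harg : (2 * (π : ℂ) * Complex.I * (p : ℂ) * (m₀ : ℂ) ^ 2 / q) =
          2 * (π : ℂ) * Complex.I * (p : ℂ) * ((n : ℤ) : ℂ) ^ 2 / q +
            2 * (π : ℂ) * Complex.I * (((p : ℤ) * ((m₀ : ℤ) ^ 2 - n ^ 2) : ℤ) : ℂ) / q := by
        push_cast
        field_simp
        ring
      rw [harg, Complex.exp_add, hone, mul_one]
    rw [key]
    ring
  · intro m hm hne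
    have hnd : ¬ (q : ℤ) ∣ ((m : ℤ) - n) := by
      intro hd
      have hd2 : (q : ℤ) ∣ ((m : ℤ) - (m₀ : ℤ)) := by
        have := dvd_sub hd hdvd
        simpa using this
      have hmod : (m₀ : ℤ) % q = (m : ℤ) % q := Int.modEq_iff_dvd.mpr hd2
      rw [Finset.mem_range] at hm
      rw [Int.emod_eq_of_lt (by positivity) (by exact_mod_cast hm₀lt),
        Int.emod_eq_of_lt (by positivity) (by exact_mod_cast hm)] at hmod
      exact hne (by exact_mod_cast hmod.symm)
    rw [if_neg hnd, mul_zero]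
  · intro h
    exact absurd (Finset.mem_range.mpr hm₀lt) h

/-- (Talbot-effect revival formula.) For coprime positive integers `p, q` and
`v₀ ∈ L²(T)` (with absolutely summable Fourier coefficients representing `v₀` pointwise),
the free Schrödinger evolution at rational time `t = 2πp/q` satisfies
`Σ_{n∈ℤ} e^{inx} e^{2πin²p/q} v̂₀(n) = (1/q) Σ_{k<q} Σ_{m<q} e^{2πikm/q} e^{2πipm²/q} v₀(x - 2πk/q)`. -/
theorem Schrodinger_revival_formula (v₀ : ℝ → ℂ)
    (hL2 : MemLp v₀ 2 (volume.restrict (Set.Ioc (-π : ℝ) π)))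
    (hsum : Summable fun n : ℤ => ‖fc v₀ n‖)
    (hrep : ∀ x : ℝ, v₀ x = ∑' n : ℤ, fc v₀ n * Complex.exp (Complex.I * n * x))
    (p q : ℕ) (hp : 0 < p) (hq : 0 < q) (hpq : Nat.Coprime p q)
    (x : ℝ) :
    ∑' n : ℤ, Complex.exp (Complex.I * n * x) *
        Complex.exp (2 * π * Complex.I * n ^ 2 * p / q) * fc v₀ n =
      (1 / q : ℂ) * ∑ k ∈ range q, ∑ m ∈ range q,
        Complex.exp (2 * π * Complex.I * k * m / q) *
          Complex.exp (2 * π * Complex.I * p * m ^ 2 / q) *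
            v₀ (x - 2 * π * k / q) := by
  have hq' : (q : ℂ) ≠ 0 := Nat.cast_ne_zero.mpr hq.ne'
  have hSum : ∀ y : ℝ, Summable (fun n : ℤ => fc v₀ n * Complex.exp (Complex.I * n * y)) := by
    intro y
    apply Summable.of_norm
    have h : (fun n : ℤ => ‖fc v₀ n * Complex.exp (Complex.I * n * y)‖) =
        fun n : ℤ => ‖fc v₀ n‖ := by
      funext n
      rw [norm_mul]
      have h1 : Complex.I * n * y = ((n * y : ℝ) : ℂ) * Complex.I := by push_cast; ring
      rw [h1]
      simp [Complex.norm_exp]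
    rw [h]; exact hsum
  -- rewrite the RHS using the pointwise Fourier representation
  have step1 : ∀ k ∈ range q, ∀ m ∈ range q,
      Complex.exp (2 * π * Complex.I * k * m / q) *
        Complex.exp (2 * π * Complex.I * p * m ^ 2 / q) * v₀ (x - 2 * π * k / q) =
      ∑' n : ℤ, Complex.exp (2 * π * Complex.I * k * m / q) *
        Complex.exp (2 * π * Complex.I * p * m ^ 2 / q) *
          (fc v₀ n * Complex.exp (Complex.I * n * ((x : ℂ) - 2 * π * k / q))) := by
    intro k _ m _
    rw [hrep (x - 2 * π * k / q), ← tsum_mul_left]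
    congr 1
    funext n
    have hc : ((x - 2 * π * k / q : ℝ) : ℂ) = (x : ℂ) - 2 * π * k / q := by
      push_cast; ring
    rw [hc]
    try ring
  rw [Finset.sum_congr rfl (fun k hk => Finset.sum_congr rfl (step1 k hk))]
  have step2 : ∀ k ∈ range q,
      ∑ m ∈ range q, ∑' n : ℤ, Complex.exp (2 * π * Complex.I * k * m / q) *
        Complex.exp (2 * π * Complex.I * p * m ^ 2 / q) *
          (fc v₀ n * Complex.exp (Complex.I * n * ((x : ℂ) - 2 * π * k / q))) =
      ∑' n : ℤ, ∑ m ∈ range q, Complex.exp (2 * π * Complex.I * k * m / q) *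
        Complex.exp (2 * π * Complex.I * p * m ^ 2 / q) *
          (fc v₀ n * Complex.exp (Complex.I * n * ((x : ℂ) - 2 * π * k / q))) := by
    intro k _
    refine (Summable.tsum_finsetSum fun m _ => ?_).symm
    have := (hSum (x - 2 * π * k / q)).mul_left
      (Complex.exp (2 * π * Complex.I * k * m / q) *
        Complex.exp (2 * π * Complex.I * p * m ^ 2 / q))
    refine this.congr fun n => ?_
    have hc : ((x - 2 * π * k / q : ℝ) : ℂ) = (x : ℂ) - 2 * π * k / q := by
      push_cast; ring
    rw [hc]
    try ring
  rw [Finset.sum_congr rfl step2]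
  have hsummable : ∀ k : ℕ, Summable (fun n : ℤ =>
      ∑ m ∈ range q, Complex.exp (2 * π * Complex.I * k * m / q) *
        Complex.exp (2 * π * Complex.I * p * m ^ 2 / q) *
          (fc v₀ n * Complex.exp (Complex.I * n * ((x : ℂ) - 2 * π * k / q)))) := by
    intro k
    refine summable_sum fun m _ => ?_
    have := (hSum (x - 2 * π * k / q)).mul_left
      (Complex.exp (2 * π * Complex.I * k * m / q) *
        Complex.exp (2 * π * Complex.I * p * m ^ 2 / q))
    refine this.congr fun n => ?_
    have hc : ((x - 2 * π * k / q : ℝ) : ℂ) = (x : ℂ) - 2 * π * k / q := by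
      push_cast; ring
    rw [hc]
    try ring
  rw [(Summable.tsum_finsetSum fun k _ => hsummable k).symm, ← tsum_mul_left]
  refine tsum_congr fun n => ?_
  have hterm : ∀ k m : ℕ,
      Complex.exp (2 * π * Complex.I * k * m / q) *
        Complex.exp (2 * π * Complex.I * p * m ^ 2 / q) *
          (fc v₀ n * Complex.exp (Complex.I * n * ((x : ℂ) - 2 * π * k / q))) =
      fc v₀ n * Complex.exp (Complex.I * n * x) *
        (Complex.exp (2 * π * Complex.I * k * m / q) *
          Complex.exp (2 * π * Complex.I * p * m ^ 2 / q) *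
            Complex.exp (-(2 * π * Complex.I * n * k / q))) := by
    intro k m
    rw [show Complex.I * (n : ℂ) * ((x : ℂ) - 2 * π * k / q) =
        Complex.I * n * x + (-(2 * π * Complex.I * n * k / q)) by field_simp; ring,
      Complex.exp_add]
    ring
  simp_rw [hterm, ← Finset.mul_sum]
  rw [talbot_gauss p q hq n]
  rw [show 2 * (π : ℂ) * Complex.I * (n : ℂ) ^ 2 * p / q =
      2 * π * Complex.I * p * (n : ℂ) ^ 2 / q by ring]
  field_simp
end

section
/- Let f : T → ℂ be α-Hölder continuous for some α ∈ (0,1), i.e. S₁ = sup|f| < ∞ and S₂ = sup_{x,h≠0}|f(x+h)-f(x)|/|h|^α < ∞. Then there is a constant C depending only on α and on the fixed bump function g such that for all j ≥ 1 and all x, 2^{αj}|(g_j ⋆ f)(x)| ≤ C(S₁ + S₂), where g_j(x) = 2^j g(2^j x) and g ∈ S(ℝ) has Fourier transform supported in [1/2,2]. -/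
open Real Set MeasureTheory

/-- The Fourier transform `(Fg)(ξ) = ∫ g(x) e^{-iξx} dx` (with the paper's normalisation). -/
noncomputable def myFT (g : ℝ → ℂ) (ξ : ℝ) : ℂ :=
  ∫ x : ℝ, g x * Complex.exp (-Complex.I * ξ * x)

/-- Let `g` be a fixed Schwartz function whose Fourier transform is supported
in `[1/2, 2]`, and let `α ∈ (0,1)`. There is a constant `C`, depending only on `α` and `g`, such
that for every `2π`-periodic `f : ℝ → ℂ` with `sup|f| ≤ S₁` and
`|f(x+h)-f(x)| ≤ S₂|h|^α` for all `x, h`, one has `2^{αj}|(g_j ⋆ f)(x)| ≤ C(S₁ + S₂)` for all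
`j ≥ 1` and all `x`, where `g_j(y) = 2^j g(2^j y)`. -/
theorem holder_implies_LP_decay (g : SchwartzMap ℝ ℂ)
    (hg : tsupport (myFT g) ⊆ Icc (1 / 2 : ℝ) 2)
    (α : ℝ) (hα : α ∈ Ioo (0 : ℝ) 1) :
    ∃ C : ℝ, 0 < C ∧
      ∀ (f : ℝ → ℂ) (S₁ S₂ : ℝ),
        (∀ x : ℝ, f (x + 2 * π) = f x) →
        Continuous f →
        (∀ x : ℝ, ‖f x‖ ≤ S₁) →
        (∀ x h : ℝ, ‖f (x + h) - f x‖ ≤ S₂ * |h| ^ α) →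
        ∀ (j : ℕ), 1 ≤ j → ∀ x : ℝ,
          (2 : ℝ) ^ (α * j) *
              ‖∫ y : ℝ, (2 : ℝ) ^ (j : ℕ) * g ((2 : ℝ) ^ (j : ℕ) * (x - y)) * f y‖ ≤
            C * (S₁ + S₂) := by
  obtain ⟨hα0, hα1⟩ := hα
  -- the weight function H u = ‖g u‖ * |u|^α is integrable
  set H : ℝ → ℝ := fun u => ‖g u‖ * |u| ^ α with hH
  have hHcont : Continuous H :=
    g.continuous.norm.mul (continuous_abs.rpow_const (fun x => Or.inr hα0.le))
  have hHint : Integrable H := by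
    have h1 : Integrable (fun u : ℝ => ‖g u‖ + ‖u‖ * ‖g u‖) := by
      have := g.integrable_pow_mul volume 1
      exact g.integrable.norm.add (by simpa using this : Integrable (fun u : ℝ => ‖u‖ * ‖g u‖))
    refine h1.mono' hHcont.aestronglyMeasurable (Filter.Eventually.of_forall fun u => ?_)
    have habs : |u| ^ α ≤ 1 + |u| := by
      rcases le_total |u| 1 with h | h
      · have : |u| ^ α ≤ 1 := Real.rpow_le_one (abs_nonneg u) h hα0.le
        linarith [abs_nonneg u]
      · have : |u| ^ α ≤ |u| ^ (1 : ℝ) :=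
          Real.rpow_le_rpow_of_exponent_le h hα1.le
        rw [Real.rpow_one] at this
        linarith
    have hnn : 0 ≤ H u := by positivity
    rw [Real.norm_of_nonneg hnn]
    have : ‖g u‖ * |u| ^ α ≤ ‖g u‖ * (1 + |u|) :=
      mul_le_mul_of_nonneg_left habs (norm_nonneg _)
    calc ‖g u‖ * |u| ^ α ≤ ‖g u‖ * (1 + |u|) := this
      _ = ‖g u‖ + ‖u‖ * ‖g u‖ := by rw [Real.norm_eq_abs]; ring
  set K : ℝ := ∫ u : ℝ, H u with hK
  have hK0 : 0 ≤ K := integral_nonneg fun u => by positivity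
  -- the integral of g vanishes
  have hg0 : (∫ u : ℝ, g u) = 0 := by
    have h0 : myFT (⇑g) 0 = 0 := by
      apply image_eq_zero_of_notMem_tsupport
      intro h
      have := hg h
      simp only [mem_Icc] at this
      linarith [this.1]
    simpa [myFT] using h0
  refine ⟨K + 1, by linarith, ?_⟩
  intro f S₁ S₂ hper hcont hS₁ hS₂ j hj x
  have hS₂0 : 0 ≤ S₂ := by
    have h := hS₂ 0 1
    have h2 : (0 : ℝ) ≤ S₂ * |(1 : ℝ)| ^ α := le_trans (norm_nonneg _) h
    simpa using h2
  have hS₁0 : 0 ≤ S₁ := le_trans (norm_nonneg _) (hS₁ 0)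
  set c : ℝ := (2 : ℝ) ^ (j : ℕ) with hcdef
  have hc : 0 < c := by positivity
  set D : ℝ := (2 : ℝ) ^ (α * (j : ℝ)) with hD
  have hD0 : 0 < D := Real.rpow_pos_of_pos two_pos _
  have hcD : c ^ α = D := by
    rw [hcdef, hD, ← Real.rpow_natCast (2 : ℝ) j, ← Real.rpow_mul two_pos.le, mul_comm]
  -- integrability facts
  have hgc : Integrable (fun z : ℝ => (c : ℂ) * g (c * z)) :=
    (g.integrable.comp_mul_left' hc.ne').const_mul _
  have hfb : Continuous fun z : ℝ => f (x - z) - f x :=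
    (hcont.comp (continuous_const.sub continuous_id)).sub continuous_const
  have hint2 : Integrable (fun z : ℝ => (c : ℂ) * g (c * z) * (f (x - z) - f x)) := by
    have := hgc.bdd_mul hfb.aestronglyMeasurable
      (c := 2 * S₁) (Filter.Eventually.of_forall fun z => (norm_sub_le _ _).trans (by linarith [hS₁ (x - z), hS₁ x]))
    refine this.congr (Filter.Eventually.of_forall fun z => ?_)
    ring
  have hint3 : Integrable (fun z : ℝ => (c : ℂ) * g (c * z) * f x) := hgc.mul_const _
  have hint1 : Integrable (fun z : ℝ => (c : ℂ) * g (c * z) * f (x - z)) := by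
    have := hint2.add hint3
    refine this.congr (Filter.Eventually.of_forall fun z => ?_)
    simp only [Pi.add_apply]
    ring
  -- step A: change of variables y ↦ x - y
  have hA : (∫ y : ℝ, (c : ℂ) * g (c * (x - y)) * f y)
      = ∫ z : ℝ, (c : ℂ) * g (c * z) * f (x - z) := by
    rw [← integral_sub_left_eq_self (fun y : ℝ => (c : ℂ) * g (c * (x - y)) * f y) volume x]
    simp
  -- step B: subtract the constant f x
  have hB : (∫ z : ℝ, (c : ℂ) * g (c * z) * f (x - z))
      = ∫ z : ℝ, (c : ℂ) * g (c * z) * (f (x - z) - f x) := by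
    have hsplit : (∫ z : ℝ, (c : ℂ) * g (c * z) * f (x - z))
        - (∫ z : ℝ, (c : ℂ) * g (c * z) * (f (x - z) - f x))
        = ∫ z : ℝ, (c : ℂ) * g (c * z) * f x := by
      rw [← integral_sub hint1 hint2]
      congr 1
      funext z
      ring
    have hzero : (∫ z : ℝ, (c : ℂ) * g (c * z) * f x) = 0 := by
      rw [integral_mul_const]
      have : (∫ z : ℝ, (c : ℂ) * g (c * z)) = 0 := by
        rw [integral_const_mul, Measure.integral_comp_mul_left (fun u => g u) c, hg0]
        simp
      rw [this, zero_mul]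
    have := hsplit.trans hzero
    linear_combination this
  -- step C: bound the norm
  set bound : ℝ → ℝ := fun z => S₂ * (D⁻¹ * (c * H (c * z))) with hbd
  have hbint : Integrable bound :=
    (((hHint.comp_mul_left' hc.ne').const_mul c).const_mul D⁻¹).const_mul S₂
  have hptwise : ∀ z : ℝ, ‖(c : ℂ) * g (c * z) * (f (x - z) - f x)‖ ≤ bound z := by
    intro z
    have h1 : ‖(c : ℂ) * g (c * z) * (f (x - z) - f x)‖
        = c * (‖g (c * z)‖ * ‖f (x - z) - f x‖) := by
      rw [norm_mul, norm_mul, Complex.norm_real, Real.norm_of_nonneg hc.le, mul_assoc]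
    have h2 : ‖f (x - z) - f x‖ ≤ S₂ * |z| ^ α := by
      have := hS₂ x (-z)
      simpa [sub_eq_add_neg] using this
    have h3 : |c * z| ^ α = D * |z| ^ α := by
      rw [abs_mul, abs_of_pos hc, Real.mul_rpow hc.le (abs_nonneg z), hcD]
    have h4 : bound z = c * (‖g (c * z)‖ * (S₂ * |z| ^ α)) := by
      rw [hbd, hH]
      simp only
      rw [h3]
      field_simp
    rw [h1, h4]
    have := mul_le_mul_of_nonneg_left h2 (norm_nonneg (g (c * z)))
    nlinarith [norm_nonneg (g (c * z))]
  have hCbound : ‖∫ z : ℝ, (c : ℂ) * g (c * z) * (f (x - z) - f x)‖ ≤ ∫ z : ℝ, bound z :=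
    norm_integral_le_of_norm_le hbint (Filter.Eventually.of_forall hptwise)
  -- compute ∫ bound
  have hbval : (∫ z : ℝ, bound z) = S₂ * D⁻¹ * K := by
    rw [hbd]
    rw [integral_const_mul, integral_const_mul, integral_const_mul,
      Measure.integral_comp_mul_left H c]
    rw [abs_of_pos (inv_pos.mpr hc), smul_eq_mul]
    field_simp
    rw [hK]
  -- put everything together
  rw [show ((2 : ℝ) : ℂ) ^ (j : ℕ) = ((c : ℝ) : ℂ) by rw [hcdef]; push_cast; ring]
  rw [hA, hB]
  have hfinal : ‖∫ z : ℝ, (c : ℂ) * g (c * z) * (f (x - z) - f x)‖ ≤ S₂ * D⁻¹ * K := by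
    rw [← hbval]; exact hCbound
  have hgoal : (2 : ℝ) ^ (α * (j : ℝ)) * ‖∫ z : ℝ, (c : ℂ) * g (c * z) * (f (x - z) - f x)‖
      ≤ D * (S₂ * D⁻¹ * K) := by
    rw [← hD]
    exact mul_le_mul_of_nonneg_left hfinal hD0.le
  have hDval : D * (S₂ * D⁻¹ * K) = S₂ * K := by
    field_simp
  rw [hDval] at hgoal
  refine hgoal.trans ?_
  nlinarith
end
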